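/- Let H = [[A,B],[C,D]] ∈ M_N({±1}) be Hadamard with A ∈ M_r({±1}) itself a Hadamard matrix and N > r(r−1)². Then D is an almost Hadamard sign pattern: writing Pol(D) = (1/√N)(D − E), every entry of E has absolute value strictly less than 1, so sgn(Pol(D)_{ij}) = D_{ij} for all i, j; moreover Pol(D)·Dᵗ > 0 (positive definite). -/

import Mathlib

open Matrix

section

open scoped ComplexOrder

/-- The positive semidefinite square root of a positive semidefinite matrix
(the definition `Matrix.PosSemidef.sqrt` of the older Mathlib, since removed). -/
noncomputable def Matrix.PosSemidef.sqrt {n 𝕜 : Type*} [Fintype n] [DecidableEq n] [RCLike 𝕜]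
    {A : Matrix n n 𝕜} (hA : A.PosSemidef) : Matrix n n 𝕜 :=
  hA.1.eigenvectorUnitary.1 * diagonal ((↑) ∘ (√·) ∘ hA.1.eigenvalues) *
  (star hA.1.eigenvectorUnitary : Matrix n n 𝕜)

end

/-!
Blockwise, `H Hᵀ = N • 1 = Hᵀ H` gives `B Bᵀ = d • 1`, `Dᵀ D = N • 1 - Bᵀ B` and `D Bᵀ = -C Aᵀ`.
Since `X = Bᵀ B` satisfies `X² = d X`, the square root of `Dᵀ D` is explicit:
`S = √N • 1 - (√N + √r)⁻¹ • X`, and `S Bᵀ = √r • Bᵀ`. Writing `D = Pol(D) S`, this yields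
`√r • (D - √N • Pol(D)) = (√N + √r)⁻¹ • (C Aᵀ B)`; the entries of `C Aᵀ B` are at most `r²`, and
`r² < √r (√N + √r)` is equivalent to `N > r (r - 1)²`. Finally `Pol(D) Dᵀ = Pol(D) S Pol(D)ᵀ`
is positive definite because `S` is.
-/

open scoped MatrixOrder in
theorem Matrix.PosSemidef.sqrt_eq_of_mul_self {n : Type*} [Fintype n] [DecidableEq n]
    {A S : Matrix n n ℝ} (hA : A.PosSemidef) (hS : S.PosSemidef) (h : S * S = A) : hA.sqrt = S := by
  have h_cfc : hA.sqrt = cfc Real.sqrt A := by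
    rw [hA.1.cfc_eq, IsHermitian.cfc, Unitary.conjStarAlgAut_apply]; rfl
  have h_nnreal : cfc Real.sqrt A = CFC.sqrt A := by
    rw [CFC.sqrt_eq_cfc, cfc_nnreal_eq_real _ A]
    refine cfc_congr fun x hx => ?_
    rw [Real.coe_sqrt, Real.coe_toNNReal _ (spectrum_nonneg_of_nonneg hA.nonneg hx)]
  rw [h_cfc, h_nnreal]
  exact CFC.sqrt_unique h hS.nonneg

namespace Matrix

variable {m n : Type*} [Fintype m]

theorem abs_mul_apply_le {l : Type*} {M₁ : Matrix l m ℝ} {M₂ : Matrix m n ℝ} {a b : ℝ}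
    (h₁ : ∀ i k, |M₁ i k| ≤ a) (h₂ : ∀ k j, |M₂ k j| ≤ b) (i : l) (j : n) :
    |(M₁ * M₂) i j| ≤ Fintype.card m * (a * b) := by
  calc |(M₁ * M₂) i j| ≤ ∑ k, |M₁ i k * M₂ k j| := Finset.abs_sum_le_sum_abs _ _
    _ ≤ ∑ _k : m, a * b := Finset.sum_le_sum fun k _ => by
        rw [abs_mul]
        exact mul_le_mul (h₁ i k) (h₂ k j) (abs_nonneg _) ((abs_nonneg _).trans (h₁ i k))
    _ = Fintype.card m * (a * b) := by simp

theorem abs_mul_mul_apply_le {k l : Type*} {M₁ : Matrix k l ℝ} {M₂ : Matrix l m ℝ}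
    {M₃ : Matrix m n ℝ} [Fintype l] (h₁ : ∀ i j, |M₁ i j| ≤ 1) (h₂ : ∀ i j, |M₂ i j| ≤ 1)
    (h₃ : ∀ i j, |M₃ i j| ≤ 1) (i : k) (j : n) :
    |(M₁ * M₂ * M₃) i j| ≤ Fintype.card l * Fintype.card m := by
  simpa [mul_comm] using abs_mul_apply_le (abs_mul_apply_le h₁ h₂) h₃ i j

variable [Fintype n]

theorem transpose_mul_self_eq_smul_one {K : Type*} [Field K] [DecidableEq n] {M : Matrix n n K}
    {a : K} (ha : a ≠ 0) (h : M * Mᵀ = a • 1) : Mᵀ * M = a • 1 := by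
  have hinv : (a⁻¹ • Mᵀ) * M = 1 :=
    mul_eq_one_comm.mp (by rw [Matrix.mul_smul, h, smul_smul, inv_mul_cancel₀ ha, one_smul])
  rw [← hinv, Matrix.smul_mul, smul_smul, mul_inv_cancel₀ ha, one_smul]

theorem blocks_of_fromBlocks_mul_transpose_eq_smul_one {K l : Type*} [Field K]
    [Fintype l] [DecidableEq l] [DecidableEq n] {A : Matrix l l K}
    {B : Matrix l n K} {C : Matrix n l K} {D : Matrix n n K} {a : K} (ha : a ≠ 0)
    (h : fromBlocks A B C D * (fromBlocks A B C D)ᵀ = a • 1) :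
    A * Aᵀ + B * Bᵀ = a • 1 ∧ C * Aᵀ + D * Bᵀ = 0 ∧ Bᵀ * B + Dᵀ * D = a • 1 := by
  have hblocks : ∀ {P Q R S}, fromBlocks P Q R S = a • (1 : Matrix (l ⊕ n) (l ⊕ n) K) →
      P = a • 1 ∧ Q = 0 ∧ R = 0 ∧ S = a • 1 := fun h => by
    simpa [← fromBlocks_one, fromBlocks_smul, fromBlocks_inj] using h
  have hMM := hblocks (by rw [← h, fromBlocks_transpose, fromBlocks_multiply])
  have hMtM := hblocks (by
    rw [← transpose_mul_self_eq_smul_one ha h, fromBlocks_transpose, fromBlocks_multiply])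
  exact ⟨hMM.1, hMM.2.2.1, hMtM.2.2.2⟩

theorem posSemidef_of_mul_self_eq_smul {R : Matrix n n ℝ} (hR : R.IsHermitian) {a : ℝ}
    (ha : 0 ≤ a) (h : R * R = a • R) : R.PosSemidef := by
  rcases ha.eq_or_lt with rfl | ha
  · have hzero : Rᴴ * R = 0 := by rw [hR.eq, h, zero_smul]
    exact conjTranspose_mul_self_eq_zero.mp hzero ▸ .zero
  · have hR' : R = a⁻¹ • (Rᴴ * R) := by
      rw [hR.eq, h, smul_smul, inv_mul_cancel₀ ha.ne', one_smul]
    exact hR' ▸ (posSemidef_conjTranspose_mul_self R).smul (inv_nonneg.mpr ha.le)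

theorem PosDef.mul_mul_transpose_of_transpose_mul_eq_one [DecidableEq n] {S P : Matrix n n ℝ}
    (hS : S.PosDef) (hP : Pᵀ * P = 1) :
    (P * S * Pᵀ).PosDef := by
  rw [← conjTranspose_eq_transpose_of_trivial]
  exact hS.mul_mul_conjTranspose_same (vecMul_injective_of_isUnit (.of_mul_eq_one_right _ hP))

end Matrix

section SqrtSubGram

variable {m n : Type*} [Fintype m] [Fintype n] [DecidableEq m] [DecidableEq n]

omit [DecidableEq n] in
theorem gram_mul_gram {B : Matrix m n ℝ} {a : ℝ} (hB : B * Bᵀ = a • 1) :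
    Bᵀ * B * (Bᵀ * B) = a • (Bᵀ * B) := by
  rw [Matrix.mul_assoc, ← Matrix.mul_assoc B, hB, Matrix.smul_mul, Matrix.one_mul, Matrix.mul_smul]

theorem posSemidef_smul_one_sub_gram {B : Matrix m n ℝ} {a : ℝ} (hB : B * Bᵀ = a • 1)
    (ha : 0 ≤ a) : (a • 1 - Bᵀ * B).PosSemidef := by
  refine Matrix.posSemidef_of_mul_self_eq_smul ?_ ha ?_
  · simp [Matrix.IsHermitian, Matrix.conjTranspose_eq_transpose_of_trivial, Matrix.transpose_sub]
  · simp only [Matrix.sub_mul, Matrix.mul_sub, Matrix.smul_mul, Matrix.mul_smul, Matrix.one_mul,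
      Matrix.mul_one, gram_mul_gram hB, smul_sub, smul_smul]
    abel

/-- If `B Bᵀ = (s² - t²) • 1`, then `Bᵀ B` has eigenvalues `0` and `s² - t²`, and this matrix,
which acts as `s` on the kernel of `B` and as `t` on its row space, is a square root of
`s² • 1 - Bᵀ B`. -/
noncomputable def sqrtSubGram (B : Matrix m n ℝ) (s t : ℝ) : Matrix n n ℝ :=
  s • 1 - (s + t)⁻¹ • (Bᵀ * B)

variable {B : Matrix m n ℝ} {s t : ℝ}

omit [Fintype n] [DecidableEq m] in
theorem transpose_sqrtSubGram : (sqrtSubGram B s t)ᵀ = sqrtSubGram B s t := by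
  simp [sqrtSubGram, Matrix.transpose_sub]

theorem sqrtSubGram_mul_self (hB : B * Bᵀ = (s ^ 2 - t ^ 2) • 1) (hst : s + t ≠ 0) :
    sqrtSubGram B s t * sqrtSubGram B s t = s ^ 2 • 1 - Bᵀ * B := by
  simp only [sqrtSubGram, Matrix.sub_mul, Matrix.mul_sub, Matrix.smul_mul, Matrix.mul_smul,
    Matrix.one_mul, Matrix.mul_one, gram_mul_gram hB, smul_smul]
  match_scalars
  · ring
  · field_simp
    ring

theorem sqrtSubGram_mul_transpose (hB : B * Bᵀ = (s ^ 2 - t ^ 2) • 1) (hst : s + t ≠ 0) :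
    sqrtSubGram B s t * Bᵀ = t • Bᵀ := by
  rw [sqrtSubGram, Matrix.sub_mul, Matrix.smul_mul, Matrix.smul_mul, Matrix.mul_assoc, hB,
    Matrix.mul_smul, Matrix.mul_one, Matrix.one_mul, smul_smul, ← sub_smul]
  congr 1
  field_simp
  ring

omit [Fintype n] [DecidableEq m] in
theorem sqrtSubGram_eq_smul_one_add (hst : s + t ≠ 0) :
    sqrtSubGram B s t = t • 1 + (s + t)⁻¹ • ((s ^ 2 - t ^ 2) • 1 - Bᵀ * B) := by
  rw [sqrtSubGram, smul_sub, smul_smul]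
  match_scalars
  · field_simp
    ring
  · ring

omit [Fintype n] [DecidableEq m] in
theorem sqrtSubGram_of_gram_eq_zero (hgram : Bᵀ * B = 0) : sqrtSubGram B s t = s • 1 := by
  rw [sqrtSubGram, hgram, smul_zero, sub_zero]

theorem posDef_sqrtSubGram (hB : B * Bᵀ = (s ^ 2 - t ^ 2) • 1) (hs : 0 < s) (ht : 0 ≤ t)
    (hts : t ≤ s) (hdeg : 0 < t ∨ Bᵀ * B = 0) : (sqrtSubGram B s t).PosDef := by
  rcases hdeg with ht | hgram
  · rw [sqrtSubGram_eq_smul_one_add (by positivity)]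
    exact (Matrix.PosDef.one.smul ht).add_posSemidef
      ((posSemidef_smul_one_sub_gram hB (by nlinarith)).smul (by positivity))
  · exact sqrtSubGram_of_gram_eq_zero hgram ▸ Matrix.PosDef.one.smul hs

omit [DecidableEq m] in
theorem mul_sqrtSubGram_sub_smul (P : Matrix n n ℝ) :
    P * sqrtSubGram B s t - s • P = -(s + t)⁻¹ • (P * (Bᵀ * B)) := by
  rw [sqrtSubGram, Matrix.mul_sub, Matrix.mul_smul, Matrix.mul_one, Matrix.mul_smul, neg_smul]
  abel

theorem smul_mul_sqrtSubGram_sub_smul (hB : B * Bᵀ = (s ^ 2 - t ^ 2) • 1) (hst : s + t ≠ 0)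
    (P : Matrix n n ℝ) :
    t • (P * sqrtSubGram B s t - s • P) = -(s + t)⁻¹ • (P * sqrtSubGram B s t * Bᵀ * B) := by
  rw [mul_sqrtSubGram_sub_smul, Matrix.mul_assoc P, sqrtSubGram_mul_transpose hB hst,
    ← Matrix.mul_assoc, smul_comm, Matrix.mul_smul, Matrix.smul_mul]

end SqrtSubGram

theorem Nat.cast_mul_pred_sq_lt {r N : ℕ} (h : r * (r - 1) ^ 2 < N) :
    (r : ℝ) * (r - 1) ^ 2 < N := by
  rcases Nat.eq_zero_or_pos r with rfl | hr
  · simpa using h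
  · have hcast : ((r * (r - 1) ^ 2 : ℕ) : ℝ) < N := by exact_mod_cast h
    rwa [Nat.cast_mul, Nat.cast_pow, Nat.cast_pred hr] at hcast

theorem sq_lt_sqrt_mul_sqrt_add_sqrt {r N : ℝ} (hr : 0 < r) (hN : r * (r - 1) ^ 2 < N) :
    r ^ 2 < √r * (√N + √r) := by
  have hcross : r * (r - 1) < √r * √N := by
    rw [← Real.sqrt_mul hr.le]
    exact Real.lt_sqrt_of_sq_lt (by nlinarith)
  nlinarith [Real.mul_self_sqrt hr.le]

theorem Matrix.abs_apply_lt_one_of_sqrt_smul_eq {l n : Type*} {r N : ℝ} {E M : Matrix l n ℝ}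
    (hr : 0 < r) (hN : r * (r - 1) ^ 2 < N) (h : √r • E = (√N + √r)⁻¹ • M)
    (hM : ∀ i j, |M i j| ≤ r ^ 2) (i : l) (j : n) : |E i j| < 1 := by
  have hpos : 0 < √r * (√N + √r) := by positivity
  have hE : E i j = M i j / (√r * (√N + √r)) := by
    rw [eq_div_iff hpos.ne', ← mul_assoc, mul_comm (E i j)]
    simpa [field] using congrFun (congrFun h i) j
  rw [hE, abs_div, abs_of_pos hpos, div_lt_one hpos]
  exact (hM i j).trans_lt (sq_lt_sqrt_mul_sqrt_add_sqrt hr hN)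

theorem Real.sign_eq_of_abs_sub_mul_lt_one {d s x : ℝ} (hd : d = 1 ∨ d = -1) (hs : 0 < s)
    (h : |d - s * x| < 1) : Real.sign x = d := by
  rcases hd with rfl | rfl <;> obtain ⟨h₁, h₂⟩ := abs_lt.mp h
  · exact Real.sign_of_pos (pos_of_mul_pos_right (by linarith) hs.le)
  · exact Real.sign_of_neg (neg_of_mul_neg_right (by linarith) hs.le)

/-- Let `H = [[A,B],[C,D]] ∈ M_N(±1)` be Hadamard with `A ∈ M_r(±1)` itself a
Hadamard matrix and `N > r(r−1)²`. Then `D` is an almost Hadamard sign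
pattern: writing `Pol(D) = (1/√N)(D − E)`, i.e. `E = D − √N·Pol(D)`, every
entry of `E` has absolute value `< 1`, so `sgn(Pol(D)ᵢⱼ) = Dᵢⱼ` for all `i, j`;
moreover `Pol(D)·Dᵗ` is positive definite. -/
theorem stmt_15 (N r d : ℕ) (hN : N = r + d) (hNr : N > r * (r - 1) ^ 2)
    (A : Matrix (Fin r) (Fin r) ℝ) (B : Matrix (Fin r) (Fin d) ℝ)
    (C : Matrix (Fin d) (Fin r) ℝ) (D : Matrix (Fin d) (Fin d) ℝ)
    (hsign : ∀ i j, Matrix.fromBlocks A B C D i j = 1 ∨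
      Matrix.fromBlocks A B C D i j = -1)
    (hH : Matrix.fromBlocks A B C D * (Matrix.fromBlocks A B C D)ᵀ
      = (N : ℝ) • 1)
    (hAHad : A * Aᵀ = (r : ℝ) • 1)
    (PD : Matrix (Fin d) (Fin d) ℝ) (hPD : PDᵀ * PD = 1)
    (hPDpol : D = PD * (Matrix.posSemidef_conjTranspose_mul_self D).sqrt) :
    (∀ i j, |(D - Real.sqrt N • PD) i j| < 1) ∧
      (∀ i j, Real.sign (PD i j) = D i j) ∧ (PD * Dᵀ).PosDef := by
  have hNpos : (0 : ℝ) < N := by exact_mod_cast (by omega : 0 < N)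
  obtain ⟨hAB, hCD, hBD⟩ := blocks_of_fromBlocks_mul_transpose_eq_smul_one hNpos.ne' hH
  have hs2 : √(N : ℝ) ^ 2 = N := Real.sq_sqrt hNpos.le
  have hBB : B * Bᵀ = (√(N : ℝ) ^ 2 - √(r : ℝ) ^ 2) • 1 := by
    rw [hs2, Real.sq_sqrt (Nat.cast_nonneg r), sub_smul, ← hAB, hAHad, add_sub_cancel_left]
  have hDD : Dᵀ * D = √(N : ℝ) ^ 2 • 1 - Bᵀ * B := by rw [hs2, ← hBD, add_sub_cancel_left]
  have hs : 0 < √(N : ℝ) := Real.sqrt_pos.mpr hNpos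
  have hdeg : 0 < √(r : ℝ) ∨ Bᵀ * B = 0 := by
    rcases Nat.eq_zero_or_pos r with rfl | hr
    · simp
    · exact .inl (by positivity)
  have hS := posDef_sqrtSubGram hBB hs (Real.sqrt_nonneg _)
    (Real.sqrt_le_sqrt (by exact_mod_cast (by omega : r ≤ N))) hdeg
  have hD : D = PD * sqrtSubGram B √(N : ℝ) √(r : ℝ) := by
    rw [hPDpol, PosSemidef.sqrt_eq_of_mul_self _ hS.posSemidef]
    rw [sqrtSubGram_mul_self hBB (by positivity), ← hDD, conjTranspose_eq_transpose_of_trivial]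
  have hent : ∀ i j, |fromBlocks A B C D i j| ≤ 1 := fun i j => by
    rcases hsign i j with h | h <;> simp [h]
  have hE : ∀ i j, |(D - √(N : ℝ) • PD) i j| < 1 := by
    rcases hdeg with ht | hgram
    · refine abs_apply_lt_one_of_sqrt_smul_eq (Real.sqrt_pos.mp ht) (Nat.cast_mul_pred_sq_lt hNr)
        (by rw [hD, smul_mul_sqrtSubGram_sub_smul hBB (by positivity), ← hD,
          eq_neg_of_add_eq_zero_right hCD, Matrix.neg_mul, smul_neg, neg_smul, neg_neg]) ?_
      simpa [sq] using abs_mul_mul_apply_le (M₁ := C) (M₂ := Aᵀ) (M₃ := B)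
        (fun i k => hent (.inr i) (.inl k)) (fun k l => hent (.inl l) (.inl k))
        (fun k j => hent (.inl k) (.inr j))
    · simp [hD, sqrtSubGram_of_gram_eq_zero hgram]
  refine ⟨hE, fun i j => Real.sign_eq_of_abs_sub_mul_lt_one
    (by simpa using hsign (.inr i) (.inr j)) hs (by simpa using hE i j), ?_⟩
  rw [hD, transpose_mul, transpose_sqrtSubGram, ← Matrix.mul_assoc]
  exact hS.mul_mul_transpose_of_transpose_mul_eq_one hPD
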